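/- Let g ∈ P_{l,sK} be a Taylor–Fourier polynomial of degree l in the action ψ, and let χ₁ = X(θ,φ) + ξθ with X a trigonometric polynomial and ξ ∈ ℝ. Then for every j ≥ 0, the Lie bracket power satisfies ‖(1/j!) L_{χ₁}^j g‖ ≤ C(l,j) (‖∂_θ X‖ + |ξ|)^j ‖g‖, where C(l,j) is the binomial coefficient l choose j, and L_{χ₁}^j g = 0 for j > l. -/

import Mathlib

open Finset

/-- Convolution product of Fourier coefficient families on the 2-torus. -/
noncomputable def fMul (f g : (ℤ × ℤ) →₀ ℂ) : (ℤ × ℤ) →₀ ℂ :=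
  f.sum fun p a => g.sum fun q b => Finsupp.single (p + q) (a * b)

/-- ℓ¹ norm of the Fourier coefficients. -/
noncomputable def fNorm (f : (ℤ × ℤ) →₀ ℂ) : ℝ :=
  ∑ k ∈ f.support, ‖f k‖

/-- The Lie bracket operator `L_{χ₁}` with `χ₁ = X(θ,φ) + ξθ`, acting on a
Taylor–Fourier polynomial `g = Σ_l g_l ψ^l` (here `g : ℕ → coefficients`,
`g l` being the Fourier coefficients of the `ψ^l` part): since `χ₁` does not
depend on `ψ, P`, one has `L_{χ₁} g = (∂_θ X + ξ) ∂_ψ g`. Here `a` stands for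
the Fourier coefficients of `∂_θ X + ξ`. -/
noncomputable def lieChi1 (a : (ℤ × ℤ) →₀ ℂ) (g : ℕ → (ℤ × ℤ) →₀ ℂ) :
    ℕ → (ℤ × ℤ) →₀ ℂ :=
  fun l => ((l + 1 : ℕ) : ℂ) • fMul a (g (l + 1))

/-!
Because `χ₁` does not involve `ψ`, the `ψ^m`-coefficient of `L_{χ₁}^j g` is
`(m + j)!/m! · a^j g_{m+j}` with `a = ∂_θX + ξ`. The falling factorial equals
`j! · C(m + j, j) ≤ j! · C(l, j)` when `m + j ≤ l`, the coefficient vanishes when `m + j > l`,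
and `‖a^j g_{m+j}‖ ≤ (‖∂_θX‖ + |ξ|)^j ‖g_{m+j}‖` by submultiplicativity of the `ℓ¹` norm.
-/

lemma fMul_zero (a : (ℤ × ℤ) →₀ ℂ) : fMul a 0 = 0 := by
  simp [fMul]

lemma fMul_smul (a x : (ℤ × ℤ) →₀ ℂ) (c : ℂ) : fMul a (c • x) = c • fMul a x := by
  simp (disch := simp) only [fMul, Finsupp.sum_smul_index', Finsupp.smul_sum,
    Finsupp.smul_single, smul_eq_mul, mul_left_comm]

lemma fMul_iterate_zero (a : (ℤ × ℤ) →₀ ℂ) (j : ℕ) : (fMul a)^[j] 0 = 0 :=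
  Function.iterate_fixed (fMul_zero a) j

lemma fMul_iterate_smul (a x : (ℤ × ℤ) →₀ ℂ) (c : ℂ) (j : ℕ) :
    (fMul a)^[j] (c • x) = c • (fMul a)^[j] x :=
  Function.Commute.iterate_left (fun x => fMul_smul a x c) j x

lemma fNorm_nonneg (f : (ℤ × ℤ) →₀ ℂ) : 0 ≤ fNorm f :=
  sum_nonneg fun _ _ => norm_nonneg _

@[simp]
lemma fNorm_zero : fNorm 0 = 0 := by simp [fNorm]

lemma fNorm_eq_sum_of_support_subset {f : (ℤ × ℤ) →₀ ℂ} {s : Finset (ℤ × ℤ)}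
    (h : f.support ⊆ s) : fNorm f = ∑ k ∈ s, ‖f k‖ :=
  sum_subset h fun k _ hk => by simp [Finsupp.notMem_support_iff.mp hk]

lemma fNorm_add_le (f g : (ℤ × ℤ) →₀ ℂ) : fNorm (f + g) ≤ fNorm f + fNorm g := by
  classical
  rw [fNorm_eq_sum_of_support_subset Finsupp.support_add,
    fNorm_eq_sum_of_support_subset subset_union_left,
    fNorm_eq_sum_of_support_subset subset_union_right, ← sum_add_distrib]
  exact sum_le_sum fun k _ => norm_add_le (f k) (g k)

lemma fNorm_sum_le {ι : Type*} (s : Finset ι) (F : ι → (ℤ × ℤ) →₀ ℂ) :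
    fNorm (∑ i ∈ s, F i) ≤ ∑ i ∈ s, fNorm (F i) :=
  le_sum_of_subadditive fNorm fNorm_zero.le fNorm_add_le s F

lemma fNorm_smul (c : ℂ) (f : (ℤ × ℤ) →₀ ℂ) : fNorm (c • f) = ‖c‖ * fNorm f := by
  rw [fNorm_eq_sum_of_support_subset Finsupp.support_smul, fNorm, mul_sum]
  simp only [Finsupp.smul_apply, norm_smul]

lemma fNorm_single_le (p : ℤ × ℤ) (c : ℂ) : fNorm (Finsupp.single p c) ≤ ‖c‖ := by
  rw [fNorm_eq_sum_of_support_subset Finsupp.support_single_subset]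
  simp

lemma fNorm_fMul_le (f g : (ℤ × ℤ) →₀ ℂ) : fNorm (fMul f g) ≤ fNorm f * fNorm g :=
  calc fNorm (fMul f g)
      ≤ ∑ p ∈ f.support, fNorm (∑ q ∈ g.support, Finsupp.single (p + q) (f p * g q)) :=
        fNorm_sum_le _ _
    _ ≤ ∑ p ∈ f.support, ∑ q ∈ g.support, ‖f p‖ * ‖g q‖ :=
        sum_le_sum fun _ _ => (fNorm_sum_le _ _).trans <| sum_le_sum fun _ _ =>
          (fNorm_single_le _ _).trans_eq (norm_mul _ _)
    _ = fNorm f * fNorm g := (sum_mul_sum _ _ _ _).symm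

lemma fNorm_fMul_iterate_le (a x : (ℤ × ℤ) →₀ ℂ) (j : ℕ) :
    fNorm ((fMul a)^[j] x) ≤ fNorm a ^ j * fNorm x := by
  induction j with
  | zero => simp
  | succ j ih =>
    rw [Function.iterate_succ_apply', pow_succ', mul_assoc]
    exact (fNorm_fMul_le _ _).trans (mul_le_mul_of_nonneg_left ih (fNorm_nonneg a))

lemma lieChi1_iterate_apply (a : (ℤ × ℤ) →₀ ℂ) (g : ℕ → (ℤ × ℤ) →₀ ℂ) (j m : ℕ) :
    (lieChi1 a)^[j] g m = ((m + j).descFactorial j : ℂ) • (fMul a)^[j] (g (m + j)) := by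
  induction j generalizing g with
  | zero => simp
  | succ j ih =>
    rw [Function.iterate_succ_apply, ih, lieChi1, fMul_iterate_smul, smul_smul,
      ← Function.iterate_succ_apply, ← add_assoc, Nat.succ_descFactorial_succ,
      Nat.cast_mul, mul_comm]

lemma lieChi1_iterate_eq_zero {a : (ℤ × ℤ) →₀ ℂ} {g : ℕ → (ℤ × ℤ) →₀ ℂ} {l : ℕ}
    (hdeg : ∀ m : ℕ, l < m → g m = 0) {j m : ℕ} (h : l < m + j) :
    (lieChi1 a)^[j] g m = 0 := by
  rw [lieChi1_iterate_apply, hdeg _ h, fMul_iterate_zero, smul_zero]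

lemma fNorm_lieChi1_iterate_le {a : (ℤ × ℤ) →₀ ℂ} {g : ℕ → (ℤ × ℤ) →₀ ℂ} {l : ℕ}
    (hdeg : ∀ m : ℕ, l < m → g m = 0) (j m : ℕ) :
    fNorm ((lieChi1 a)^[j] g m)
      ≤ j.factorial * l.choose j * fNorm a ^ j * fNorm (g (m + j)) := by
  rcases lt_or_ge l (m + j) with h | h
  · simp [lieChi1_iterate_eq_zero hdeg h, hdeg _ h]
  rw [lieChi1_iterate_apply, fNorm_smul, Complex.norm_natCast,
    Nat.descFactorial_eq_factorial_mul_choose, mul_assoc _ (fNorm a ^ j)]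
  push_cast
  have hiter := fNorm_fMul_iterate_le a (g (m + j)) j
  have hchoose := Nat.choose_le_choose j h
  have hiter_nonneg := fNorm_nonneg ((fMul a)^[j] (g (m + j)))
  gcongr

lemma sum_range_shift_le {M : Type*} [AddCommMonoid M] [PartialOrder M] [IsOrderedAddMonoid M]
    {f : ℕ → M} {n : ℕ} (hf : ∀ m, 0 ≤ f m) (hvan : ∀ m, n ≤ m → f m = 0) (j : ℕ) :
    ∑ m ∈ range n, f (m + j) ≤ ∑ m ∈ range n, f m :=
  calc ∑ m ∈ range n, f (m + j)
      ≤ ∑ m ∈ range j, f m + ∑ m ∈ range n, f (j + m) := by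
        simp only [add_comm _ j]
        exact le_add_of_nonneg_left (sum_nonneg fun m _ => hf m)
    _ = ∑ m ∈ range n, f m + ∑ m ∈ range j, f (n + m) := by
        rw [← sum_range_add, ← sum_range_add, add_comm]
    _ = ∑ m ∈ range n, f m := by
        rw [sum_eq_zero fun m _ => hvan _ (Nat.le_add_right n m), add_zero]

/-- Bound for the powers of the Lie bracket generated by `χ₁ = X + ξθ` on
`g ∈ P_{l,sK}`: `‖(1/j!) L_{χ₁}^j g‖ ≤ C(l,j)(‖∂_θX‖+|ξ|)^j ‖g‖` with
`C(l,j) = l.choose j`, and `L_{χ₁}^j g = 0` for `j > l`. -/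
theorem stmt_10 (u : (ℤ × ℤ) →₀ ℂ) (ξ : ℝ) (l : ℕ) (g : ℕ → (ℤ × ℤ) →₀ ℂ)
    (hdeg : ∀ m : ℕ, l < m → g m = 0) :
    (∀ j : ℕ,
      ((1 : ℝ) / (j.factorial : ℝ)) *
          ∑ m ∈ Finset.range (l + 1),
            fNorm ((lieChi1 (u + Finsupp.single 0 (ξ : ℂ)))^[j] g m)
        ≤ (l.choose j : ℝ) * (fNorm u + |ξ|) ^ j *
            ∑ m ∈ Finset.range (l + 1), fNorm (g m)) ∧
    (∀ j : ℕ, l < j → ∀ m : ℕ,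
      (lieChi1 (u + Finsupp.single 0 (ξ : ℂ)))^[j] g m = 0) := by
  set a := u + Finsupp.single 0 (ξ : ℂ)
  have ha : fNorm a ≤ fNorm u + |ξ| := (fNorm_add_le _ _).trans <| by
    simpa using fNorm_single_le (0 : ℤ × ℤ) (ξ : ℂ)
  refine ⟨fun j => ?_, fun j hj m => lieChi1_iterate_eq_zero hdeg (by omega)⟩
  have hshift : ∑ m ∈ range (l + 1), fNorm (g (m + j)) ≤ ∑ m ∈ range (l + 1), fNorm (g m) :=
    sum_range_shift_le (fun m => fNorm_nonneg _)
      (fun m hm => by rw [hdeg m (by omega), fNorm_zero]) j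
  calc 1 / (j.factorial : ℝ) * ∑ m ∈ range (l + 1), fNorm ((lieChi1 a)^[j] g m)
      ≤ 1 / (j.factorial : ℝ) * ∑ m ∈ range (l + 1),
          j.factorial * l.choose j * fNorm a ^ j * fNorm (g (m + j)) := by
        gcongr with m
        exact fNorm_lieChi1_iterate_le hdeg j m
    _ = l.choose j * fNorm a ^ j * ∑ m ∈ range (l + 1), fNorm (g (m + j)) := by
        rw [← mul_sum]
        field_simp
    _ ≤ l.choose j * (fNorm u + |ξ|) ^ j * ∑ m ∈ range (l + 1), fNorm (g m) := by
        have ha_nonneg := fNorm_nonneg a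
        have hu_nonneg := fNorm_nonneg u
        have hsum_nonneg := sum_nonneg fun m (_ : m ∈ range (l + 1)) => fNorm_nonneg (g (m + j))
        gcongr
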